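/- arXiv:1308.4772 — 3 statements merged into one kernel-verified Lean document; each statement's English description precedes it below -/
import Mathlib

section
/- Let σ be a shift matrix of size (n+1)×(n+1). Then the span of the elements {e_{i,j} t^r | 1 ≤ i,j ≤ n+1, r ≥ s_{i,j}} is a Lie subalgebra of gl(1|n)[t]; i.e. it is closed under the supercommutator. -/
/-!
The product `e_{i,j} t^r · e_{h,k} t^s` vanishes unless `j = h`, in which case it is
`e_{i,k} t^{r+s}`, and `r + s ≥ s_{i,j} + s_{j,k} ≥ s_{i,k}`. So the span is closed under
the associative product, and the supercommutator is a difference of two products up to a sign `±1`.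
The triangle inequality `s_{i,k} ≤ s_{i,j} + s_{j,k}` follows from the additivity of a shift
matrix along ordered triples, because among any three indices one lies between the other two.
-/

open Polynomial Matrix

theorem abs_sub_add_abs_sub_eq_or {α : Type*} [AddCommGroup α] [LinearOrder α]
    [IsOrderedAddMonoid α] (a b c : α) :
    |a - b| + |b - c| = |a - c| ∨ |b - a| + |a - c| = |b - c| ∨
      |a - c| + |c - b| = |a - b| := by
  grind [abs_of_nonneg, abs_of_nonpos]

def IsShiftMatrix {m : ℕ} (σ : Fin m → Fin m → ℕ) : Prop :=
  ∀ i j k : Fin m,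
    |((i : ℕ) : ℤ) - ((j : ℕ) : ℤ)| + |((j : ℕ) : ℤ) - ((k : ℕ) : ℤ)|
      = |((i : ℕ) : ℤ) - ((k : ℕ) : ℤ)| → σ i j + σ j k = σ i k

theorem IsShiftMatrix.le_add {m : ℕ} {σ : Fin m → Fin m → ℕ} (hσ : IsShiftMatrix σ)
    (i j k : Fin m) : σ i k ≤ σ i j + σ j k := by
  rcases abs_sub_add_abs_sub_eq_or ((i : ℕ) : ℤ) (j : ℕ) (k : ℕ) with h | h | h
  · exact (hσ i j k h).ge
  · have := hσ j i k h; omega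
  · have := hσ i k j h; omega

section ShiftSpan

variable {R ι : Type*} [CommSemiring R] [DecidableEq ι]

noncomputable def shiftSpan (σ : ι → ι → ℕ) : Submodule R (Matrix ι ι R[X]) :=
  Submodule.span R {x | ∃ i j r, σ i j ≤ r ∧ x = single i j (X ^ r)}

theorem single_mem_shiftSpan {σ : ι → ι → ℕ} {i j : ι} {r : ℕ} (hr : σ i j ≤ r) :
    single i j (X ^ r) ∈ shiftSpan (R := R) σ :=
  Submodule.subset_span ⟨i, j, r, hr, rfl⟩

theorem single_mul_single_mem_shiftSpan [Fintype ι] {σ : ι → ι → ℕ}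
    (hσ : ∀ a b c, σ a c ≤ σ a b + σ b c) {i j h k : ι} {r t : ℕ}
    (hr : σ i j ≤ r) (ht : σ h k ≤ t) :
    single i j (X ^ r) * single h k (X ^ t) ∈ shiftSpan (R := R) σ := by
  by_cases hjh : j = h
  · subst hjh
    rw [single_mul_single_same, ← pow_add]
    exact single_mem_shiftSpan ((hσ i j k).trans (add_le_add hr ht))
  · rw [single_mul_single_of_ne (h := hjh)]
    exact zero_mem _

end ShiftSpan

theorem Submodule.neg_one_pow_smul_mem {R A M : Type*} [Ring R] [Ring A] [AddCommGroup M]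
    [Module R M] [Module A M] (p : Submodule R M) {x : M} (hx : x ∈ p) (m : ℕ) :
    ((-1 : A) ^ m) • x ∈ p := by
  rcases neg_one_pow_eq_or A m with h | h <;> simp [h, hx, p.neg_mem]

/-- For a shift matrix `σ`, the span of the elements `e_{i,j} t^r` with `r ≥ s_{i,j}`
is closed under the supercommutator of `gl(1|n)[t]`. -/
theorem stmt_5 (n : ℕ) (σ : Fin (n+1) → Fin (n+1) → ℕ)
    (hshift : ∀ i j k : Fin (n+1),
      |((i : ℕ) : ℤ) - ((j : ℕ) : ℤ)| + |((j : ℕ) : ℤ) - ((k : ℕ) : ℤ)|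
        = |((i : ℕ) : ℤ) - ((k : ℕ) : ℤ)| →
      σ i j + σ j k = σ i k) :
    let pa : Fin (n+1) → ℕ := fun x => if (x : ℕ) = 0 then 0 else 1
    let E : Fin (n+1) → Fin (n+1) → ℕ → Matrix (Fin (n+1)) (Fin (n+1)) (Polynomial ℂ) :=
      fun x y t => Matrix.single x y (Polynomial.X ^ t)
    let S : Submodule ℂ (Matrix (Fin (n+1)) (Fin (n+1)) (Polynomial ℂ)) :=
      Submodule.span ℂ {x | ∃ i j r, σ i j ≤ r ∧ x = E i j r}
    ∀ (i j h k : Fin (n+1)) (r t : ℕ), σ i j ≤ r → σ h k ≤ t →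
      E i j r * E h k t
        - ((-1 : Polynomial ℂ) ^ ((pa i + pa j) * (pa h + pa k))) • (E h k t * E i j r) ∈ S := by
  intro pa E S i j h k r t hr ht
  have hmul {a b c d : Fin (n+1)} {u v : ℕ} (hu : σ a b ≤ u) (hv : σ c d ≤ v) :
      E a b u * E c d v ∈ S :=
    single_mul_single_mem_shiftSpan (IsShiftMatrix.le_add hshift) hu hv
  exact sub_mem (hmul hr ht) (S.neg_one_pow_smul_mem (hmul ht hr) _)
end

section
/- With the Gauss decomposition notation of Lemma 3.5: if the block diagonal factor at position b of shape μ splits as ⁽μ⁾D_b = [[I_α,0],[C,I_β]]·[[A,0],[0,D]]·[[I_α,B],[0,I_β]] for the refined composition ν obtained by splitting μ_b = α + β, then the block Gauss decomposition of T(u) with respect to ν satisfies: ⁽ν⁾D_a = ⁽μ⁾D_a for a < b, ⁽ν⁾D_b = A, ⁽ν⁾D_{b+1} = D, and ⁽ν⁾D_c = ⁽μ⁾D_{c−1} for c > b+1. -/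
/-!
Let `D'` be `⁽μ⁾D` with its block `b` replaced by `Δ = diag(A, D)`. As `L`, `Δ`, `U` are the
identity outside block `b`, they multiply like matrices of that block alone, so `L D' U = ⁽μ⁾D`.
Hence `T = (⁽μ⁾F L) D' (U ⁽μ⁾E)`, and since a block unitriangular matrix for `μ` is also one for
the finer `ν`, this is a block Gauss decomposition of `T` for `ν`. The block-diagonal factor of such
a decomposition is unique: block unitriangular matrices `X` are invertible within their class,
`1 - X` being nilpotent. So `⁽ν⁾D = D'`.
-/

open Finset OrderDual

namespace Matrix

variable {ι α R : Type*} [Ring R]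

def IsBlockDiagonal (M : Matrix ι ι R) (b : ι → α) : Prop :=
  ∀ ⦃i j⦄, b i ≠ b j → M i j = 0

theorem isBlockDiagonal_one [DecidableEq ι] (b : ι → α) : (1 : Matrix ι ι R).IsBlockDiagonal b :=
  fun _ _ h => one_apply_ne (ne_of_apply_ne b h)

section LinearOrder

variable [LinearOrder α] {b : ι → α} {X Y : Matrix ι ι R}

theorem IsBlockDiagonal.blockTriangular (h : X.IsBlockDiagonal b) : X.BlockTriangular b :=
  fun _ _ hij => h hij.ne'

theorem IsBlockDiagonal.blockTriangular_toDual (h : X.IsBlockDiagonal b) :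
    X.BlockTriangular (toDual ∘ b) :=
  fun _ _ hij => h hij.ne'

variable [DecidableEq ι]

/-- Upper block unitriangular; lower ones are encoded as `IsBlockUnitriangular M (toDual ∘ b)`. -/
def IsBlockUnitriangular (M : Matrix ι ι R) (b : ι → α) : Prop :=
  M.BlockTriangular b ∧ ∀ ⦃i j⦄, b i = b j → M i j = (1 : Matrix ι ι R) i j

theorem IsBlockUnitriangular.of_refines {b' : ι → α} (hX : X.IsBlockUnitriangular b')
    (hb : ∀ i j, b' i < b' j → b i < b j) : X.IsBlockUnitriangular b := by
  have hdiag : ∀ ⦃i j⦄, b i = b j → b' i = b' j := fun i j hij =>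
    le_antisymm (not_lt.1 fun h => (hb j i h).ne' hij) (not_lt.1 fun h => (hb i j h).ne hij)
  refine ⟨fun i j hij => ?_, fun i j hij => hX.2 (hdiag hij)⟩
  rcases lt_trichotomy (b' j) (b' i) with h | h | h
  · exact hX.1 h
  · rw [hX.2 h.symm, one_apply_ne (ne_of_apply_ne b hij.ne')]
  · exact absurd (hb i j h) (not_lt.2 hij.le)

variable [Fintype ι]

theorem IsBlockUnitriangular.mul_apply_of_eq (hX : X.IsBlockUnitriangular b)
    (hY : Y.BlockTriangular b) {i j : ι} (hij : b i = b j) : (X * Y) i j = Y i j := by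
  rw [mul_apply, sum_eq_single i (fun k _ hki => ?_) (by simp), hX.2 rfl, one_apply_eq, one_mul]
  rcases lt_trichotomy (b k) (b i) with h | h | h
  · rw [hX.1 h, zero_mul]
  · rw [hX.2 h.symm, one_apply_ne hki.symm, zero_mul]
  · rw [hY (hij ▸ h), mul_zero]

theorem IsBlockUnitriangular.apply_mul_of_eq (hX : X.IsBlockUnitriangular b)
    (hY : Y.BlockTriangular b) {i j : ι} (hij : b i = b j) : (Y * X) i j = Y i j := by
  rw [mul_apply, sum_eq_single j (fun k _ hkj => ?_) (by simp), hX.2 rfl, one_apply_eq, mul_one]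
  rcases lt_trichotomy (b k) (b j) with h | h | h
  · rw [hY (hij ▸ h), zero_mul]
  · rw [hX.2 h, one_apply_ne hkj, mul_zero]
  · rw [hX.1 h, mul_zero]

theorem IsBlockUnitriangular.mul (hX : X.IsBlockUnitriangular b)
    (hY : Y.IsBlockUnitriangular b) : (X * Y).IsBlockUnitriangular b :=
  ⟨hX.1.mul hY.1, fun _ _ hij => (hX.mul_apply_of_eq hY.1 hij).trans (hY.2 hij)⟩

/-- Along a nonzero entry of `N` the rank `#{k | b k < b i}` strictly increases, and ranks are
smaller than `card ι`. -/
theorem pow_card_eq_zero_of_strictBlockTriangular {N : Matrix ι ι R}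
    (hN : ∀ ⦃i j⦄, b j ≤ b i → N i j = 0) : N ^ Fintype.card ι = 0 := by
  let rank : ι → ℕ := fun i => #{k | b k < b i}
  have rank_lt_rank : ∀ {i j}, b i < b j → rank i < rank j := fun {i j} hij =>
    card_lt_card <| (ssubset_iff_of_subset fun k hk => by
      simp only [mem_filter, mem_univ, true_and] at hk ⊢; exact hk.trans hij).2
      ⟨i, by simpa using hij, by simp⟩
  have rank_lt_card : ∀ i, rank i < Fintype.card ι := fun i =>
    card_lt_card (filter_ssubset.2 ⟨i, mem_univ i, lt_irrefl _⟩)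
  have key : ∀ m i j, rank j < rank i + m → (N ^ m) i j = 0 := by
    intro m
    induction m with
    | zero => intro i j h; exact one_apply_ne (by rintro rfl; omega)
    | succ m ih =>
      intro i j h
      rw [pow_succ, mul_apply]
      refine sum_eq_zero fun k _ => ?_
      by_cases hk : rank k < rank i + m
      · rw [ih i k hk, zero_mul]
      · rw [hN (not_lt.1 fun hkj => by have := rank_lt_rank hkj; omega), mul_zero]
  ext i j
  exact key _ i j (by have := rank_lt_card j; omega)

theorem IsBlockUnitriangular.exists_mul_eq_one (hX : X.IsBlockUnitriangular b) :
    ∃ Y : Matrix ι ι R, Y.IsBlockUnitriangular b ∧ X * Y = 1 ∧ Y * X = 1 := by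
  obtain ⟨N, rfl⟩ : ∃ N, X = 1 - N := ⟨1 - X, (sub_sub_cancel 1 X).symm⟩
  have hN : ∀ ⦃i j⦄, b j ≤ b i → N i j = 0 := fun i j hij => by
    rcases hij.eq_or_lt with h | h
    · simpa using hX.2 h.symm
    · simpa [one_apply_ne (ne_of_apply_ne b h.ne')] using hX.1 h
  have hnil := pow_card_eq_zero_of_strictBlockTriangular hN
  set Y := ∑ k ∈ range (Fintype.card ι), N ^ k
  have hXY : (1 - N) * Y = 1 := by rw [mul_neg_geom_sum, hnil, sub_zero]
  have hYX : Y * (1 - N) = 1 := by rw [geom_sum_mul_neg, hnil, sub_zero]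
  have hY : Y.BlockTriangular b :=
    Subsemiring.sum_mem (blockTriangularSubsemiring R b) fun k _ =>
      (show N.BlockTriangular b from fun _ _ h => hN h.le).pow k
  exact ⟨Y, ⟨hY, fun i j hij => by rw [← hX.mul_apply_of_eq hY hij, hXY]⟩, hXY, hYX⟩

theorem IsBlockDiagonal.eq_of_mul_mul_eq {F F' D D' E E' : Matrix ι ι R}
    (hF : F.IsBlockUnitriangular (toDual ∘ b)) (hF' : F'.IsBlockUnitriangular (toDual ∘ b))
    (hE : E.IsBlockUnitriangular b) (hE' : E'.IsBlockUnitriangular b)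
    (hD : D.IsBlockDiagonal b) (hD' : D'.IsBlockDiagonal b)
    (h : F * D * E = F' * D' * E') : D = D' := by
  obtain ⟨Fi, hFi, -, hFiF'⟩ := hF'.exists_mul_eq_one
  obtain ⟨Ei, hEi, hEEi, -⟩ := hE.exists_mul_eq_one
  have h' : (Fi * F) * D = D' * (E' * Ei) := by
    calc (Fi * F) * D = Fi * (F * D * E) * Ei := by
          simp only [mul_assoc, hEEi, mul_one]
      _ = D' * (E' * Ei) := by rw [h]; simp only [← mul_assoc, hFiF', one_mul]
  ext i j
  by_cases hij : b i = b j
  · calc D i j = (Fi * F * D) i j :=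
          ((hFi.mul hF).mul_apply_of_eq hD.blockTriangular_toDual hij).symm
      _ = (D' * (E' * Ei)) i j := by rw [h']
      _ = D' i j := (hE'.mul hEi).apply_mul_of_eq hD'.blockTriangular hij
  · rw [hD hij, hD' hij]

end LinearOrder

section OneOutsideBlock

variable [DecidableEq ι] {b : ι → α} {c : α} {X : Matrix ι ι R}

def IsOneOutsideBlock (X : Matrix ι ι R) (b : ι → α) (c : α) : Prop :=
  ∀ i j, ¬(b i = c ∧ b j = c) → X i j = (1 : Matrix ι ι R) i j

theorem IsOneOutsideBlock.isBlockDiagonal (h : X.IsOneOutsideBlock b c) : X.IsBlockDiagonal b :=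
  fun i j hij => by
    rw [h i j fun ⟨hi, hj⟩ => hij (hi.trans hj.symm), one_apply_ne (ne_of_apply_ne b hij)]

end OneOutsideBlock

section ReplaceBlock

variable [DecidableEq α]

/-- For block-diagonal `X` and `Y`, this is `Y` with its diagonal block `c` replaced by that
of `X`. -/
def replaceBlock (Y : Matrix ι ι R) (b : ι → α) (c : α) (X : Matrix ι ι R) : Matrix ι ι R :=
  of fun i j => if b i = c then X i j else Y i j

variable {b : ι → α} {c : α} {X X' Y Y' : Matrix ι ι R}

theorem replaceBlock_mul_replaceBlock [Fintype ι] (hX : X.IsBlockDiagonal b)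
    (hY : Y.IsBlockDiagonal b) :
    Y.replaceBlock b c X * Y'.replaceBlock b c X' = (Y * Y').replaceBlock b c (X * X') := by
  ext i j
  simp only [replaceBlock, mul_apply, of_apply]
  split_ifs with hi
  · refine sum_congr rfl fun k _ => ?_
    split_ifs with hk
    · rfl
    · rw [hX (hi.trans_ne (Ne.symm hk)), zero_mul, zero_mul]
  · refine sum_congr rfl fun k _ => ?_
    split_ifs with hk
    · rw [hY (fun hik => hi (hik.trans hk)), zero_mul, zero_mul]
    · rfl

theorem IsBlockDiagonal.replaceBlock {b' : ι → α} (hY : Y.IsBlockDiagonal b')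
    (hX : X.IsBlockDiagonal b) (hb : ∀ i j, b' i = b' j → b' i ≠ c → b i = b j) :
    (Y.replaceBlock b' c X).IsBlockDiagonal b := fun i j hij => by
  simp only [Matrix.replaceBlock, of_apply]
  split_ifs with hi
  · exact hX hij
  · exact hY fun h => hij (hb i j h hi)

variable [DecidableEq ι]

theorem IsOneOutsideBlock.one_replaceBlock (h : X.IsOneOutsideBlock b c) :
    (1 : Matrix ι ι R).replaceBlock b c X = X := by
  ext i j
  by_cases hi : b i = c
  · simp [replaceBlock, hi]
  · simp [replaceBlock, hi, h i j (fun hij => hi hij.1)]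

theorem mul_replaceBlock_mul [Fintype ι] {L Δ U : Matrix ι ι R} (hY : Y.IsBlockDiagonal b)
    (hL : L.IsOneOutsideBlock b c) (hΔ : Δ.IsOneOutsideBlock b c) (hU : U.IsOneOutsideBlock b c)
    (hfact : of (fun i j => if b i = c ∧ b j = c then Y i j else (1 : Matrix ι ι R) i j)
      = L * Δ * U) :
    L * Y.replaceBlock b c Δ * U = Y := by
  calc L * Y.replaceBlock b c Δ * U
      = (1 : Matrix ι ι R).replaceBlock b c L *
          (Y.replaceBlock b c Δ * (1 : Matrix ι ι R).replaceBlock b c U) := by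
        rw [hL.one_replaceBlock, hU.one_replaceBlock, mul_assoc]
    _ = Y.replaceBlock b c (L * Δ * U) := by
        rw [replaceBlock_mul_replaceBlock hΔ.isBlockDiagonal hY, mul_one,
          replaceBlock_mul_replaceBlock hL.isBlockDiagonal (isBlockDiagonal_one b), one_mul,
          mul_assoc]
    _ = Y := by
        ext i j
        rw [← hfact]
        by_cases hi : b i = c
        · by_cases hj : b j = c
          · simp [replaceBlock, hi, hj]
          · simp [replaceBlock, hi, hj, hY (hi.trans_ne (Ne.symm hj)),
              one_apply_ne (ne_of_apply_ne b (hi.trans_ne (Ne.symm hj)))]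
        · simp [replaceBlock, hi]

end ReplaceBlock

end Matrix

open Matrix

theorem splitBlock_cases {ι : Type*} {bμ bν : ι → ℕ} {c : ℕ}
    (hlt : ∀ i, bμ i < c → bν i = bμ i) (hgt : ∀ i, c < bμ i → bν i = bμ i + 1)
    (heq : ∀ i, bμ i = c → bν i = c ∨ bν i = c + 1) (i : ι) :
    (bμ i < c ∧ bν i = bμ i) ∨ (bμ i = c ∧ (bν i = c ∨ bν i = c + 1)) ∨
      (c < bμ i ∧ bν i = bμ i + 1) := by
  rcases lt_trichotomy (bμ i) c with h | h | h
  · exact .inl ⟨h, hlt i h⟩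
  · exact .inr (.inl ⟨h, heq i h⟩)
  · exact .inr (.inr ⟨h, hgt i h⟩)

theorem stmt_14_general (n : ℕ) (A : Type*) [Ring A]
    (blkμ blkν : Fin (n+1) → ℕ) (b : ℕ)
    (hlt : ∀ i, blkμ i < b → blkν i = blkμ i)
    (hgt : ∀ i, b < blkμ i → blkν i = blkμ i + 1)
    (heq : ∀ i, blkμ i = b → blkν i = b ∨ blkν i = b + 1)
    (T Fμ Dμ Eμ Fν Dν Eν L Δ U : Matrix (Fin (n+1)) (Fin (n+1)) (PowerSeries A))
    (hFμ1 : ∀ i j, blkμ i < blkμ j → Fμ i j = 0)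
    (hFμ2 : ∀ i j, blkμ i = blkμ j → Fμ i j = if i = j then 1 else 0)
    (hDμ : ∀ i j, blkμ i ≠ blkμ j → Dμ i j = 0)
    (hEμ1 : ∀ i j, blkμ j < blkμ i → Eμ i j = 0)
    (hEμ2 : ∀ i j, blkμ i = blkμ j → Eμ i j = if i = j then 1 else 0)
    (hdecμ : T = Fμ * Dμ * Eμ)
    (hFν1 : ∀ i j, blkν i < blkν j → Fν i j = 0)
    (hFν2 : ∀ i j, blkν i = blkν j → Fν i j = if i = j then 1 else 0)
    (hDν : ∀ i j, blkν i ≠ blkν j → Dν i j = 0)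
    (hEν1 : ∀ i j, blkν j < blkν i → Eν i j = 0)
    (hEν2 : ∀ i j, blkν i = blkν j → Eν i j = if i = j then 1 else 0)
    (hdecν : T = Fν * Dν * Eν)
    (hL1 : ∀ i j, ¬(blkμ i = b ∧ blkμ j = b) → L i j = if i = j then 1 else 0)
    (hL2 : ∀ i j, blkν i < blkν j → L i j = 0)
    (hL3 : ∀ i j, blkν i = blkν j → L i j = if i = j then 1 else 0)
    (hU1 : ∀ i j, ¬(blkμ i = b ∧ blkμ j = b) → U i j = if i = j then 1 else 0)
    (hU2 : ∀ i j, blkν j < blkν i → U i j = 0)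
    (hU3 : ∀ i j, blkν i = blkν j → U i j = if i = j then 1 else 0)
    (hΔ1 : ∀ i j, blkν i ≠ blkν j → Δ i j = 0)
    (hΔ2 : ∀ i j, ¬(blkμ i = b ∧ blkμ j = b) → Δ i j = if i = j then 1 else 0)
    (hfact : (Matrix.of fun i j =>
        if blkμ i = b ∧ blkμ j = b then Dμ i j else if i = j then 1 else 0) = L * Δ * U) :
    (∀ i j, blkμ i = blkμ j → blkμ i ≠ b → Dν i j = Dμ i j) ∧
    (∀ i j, blkμ i = b → blkμ j = b → blkν i = blkν j → Dν i j = Δ i j) := by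
  have hcases := splitBlock_cases hlt hgt heq
  have hrefines : ∀ i j, blkμ i < blkμ j → blkν i < blkν j := fun i j h => by
    rcases hcases i with hi | hi | hi <;> rcases hcases j with hj | hj | hj <;> omega
  have hsplit : ∀ i j, blkμ i = blkμ j → blkμ i ≠ b → blkν i = blkν j := fun i j h hb => by
    rcases hcases i with hi | hi | hi <;> rcases hcases j with hj | hj | hj <;> omega
  have hFμ : Fμ.IsBlockUnitriangular (toDual ∘ blkν) :=
    IsBlockUnitriangular.of_refines (b' := toDual ∘ blkμ) ⟨hFμ1, hFμ2⟩
      fun i j h => hrefines j i h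
  have hEμ : Eμ.IsBlockUnitriangular blkν :=
    IsBlockUnitriangular.of_refines (b' := blkμ) ⟨hEμ1, hEμ2⟩ hrefines
  have hL : L.IsBlockUnitriangular (toDual ∘ blkν) := ⟨hL2, hL3⟩
  have hU : U.IsBlockUnitriangular blkν := ⟨hU2, hU3⟩
  have hFν : Fν.IsBlockUnitriangular (toDual ∘ blkν) := ⟨hFν1, hFν2⟩
  have hEν : Eν.IsBlockUnitriangular blkν := ⟨hEν1, hEν2⟩
  set D' := Dμ.replaceBlock blkμ b Δ
  have hD' : D'.IsBlockDiagonal blkν :=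
    IsBlockDiagonal.replaceBlock (b' := blkμ) hDμ hΔ1 hsplit
  have hLDU : L * D' * U = Dμ := mul_replaceBlock_mul hDμ hL1 hΔ2 hU1 hfact
  have hD : Dν = D' := by
    refine IsBlockDiagonal.eq_of_mul_mul_eq hFν (hFμ.mul hL) hEν (hU.mul hEμ) hDν hD' ?_
    rw [← hdecν, hdecμ, ← hLDU]
    simp only [mul_assoc]
  refine ⟨fun i j _ hi => ?_, fun i j hi _ _ => ?_⟩ <;> simp [hD, D', replaceBlock, hi]

/-- Refinement of a block Gauss decomposition (Lemma 3.5): splitting the `b`-th diagonal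
block `⁽μ⁾D_b = [[I,0],[C,I]]·[[A,0],[0,D]]·[[I,B],[0,I]]` yields the diagonal factors of
the Gauss decomposition for the refined composition `ν`: the diagonal blocks away from
block `b` are unchanged (up to reindexing), while `⁽ν⁾D_b = A` and `⁽ν⁾D_{b+1} = D`. -/
theorem stmt_14 (n : ℕ) (A : Type*) [Ring A] [Algebra ℂ A]
    (blkμ blkν : Fin (n+1) → ℕ) (b : ℕ)
    (hμmono : Monotone blkμ) (hνmono : Monotone blkν)
    (hlt : ∀ i, blkμ i < b → blkν i = blkμ i)
    (hgt : ∀ i, b < blkμ i → blkν i = blkμ i + 1)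
    (heq : ∀ i, blkμ i = b → blkν i = b ∨ blkν i = b + 1)
    (T Fμ Dμ Eμ Fν Dν Eν L Δ U : Matrix (Fin (n+1)) (Fin (n+1)) (PowerSeries A))
    (hT : ∀ i j, PowerSeries.constantCoeff (T i j) = if i = j then 1 else 0)
    (hFμ1 : ∀ i j, blkμ i < blkμ j → Fμ i j = 0)
    (hFμ2 : ∀ i j, blkμ i = blkμ j → Fμ i j = if i = j then 1 else 0)
    (hDμ : ∀ i j, blkμ i ≠ blkμ j → Dμ i j = 0)
    (hEμ1 : ∀ i j, blkμ j < blkμ i → Eμ i j = 0)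
    (hEμ2 : ∀ i j, blkμ i = blkμ j → Eμ i j = if i = j then 1 else 0)
    (hdecμ : T = Fμ * Dμ * Eμ)
    (hFν1 : ∀ i j, blkν i < blkν j → Fν i j = 0)
    (hFν2 : ∀ i j, blkν i = blkν j → Fν i j = if i = j then 1 else 0)
    (hDν : ∀ i j, blkν i ≠ blkν j → Dν i j = 0)
    (hEν1 : ∀ i j, blkν j < blkν i → Eν i j = 0)
    (hEν2 : ∀ i j, blkν i = blkν j → Eν i j = if i = j then 1 else 0)
    (hdecν : T = Fν * Dν * Eν)
    (hL1 : ∀ i j, ¬(blkμ i = b ∧ blkμ j = b) → L i j = if i = j then 1 else 0)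
    (hL2 : ∀ i j, blkν i < blkν j → L i j = 0)
    (hL3 : ∀ i j, blkν i = blkν j → L i j = if i = j then 1 else 0)
    (hU1 : ∀ i j, ¬(blkμ i = b ∧ blkμ j = b) → U i j = if i = j then 1 else 0)
    (hU2 : ∀ i j, blkν j < blkν i → U i j = 0)
    (hU3 : ∀ i j, blkν i = blkν j → U i j = if i = j then 1 else 0)
    (hΔ1 : ∀ i j, blkν i ≠ blkν j → Δ i j = 0)
    (hΔ2 : ∀ i j, ¬(blkμ i = b ∧ blkμ j = b) → Δ i j = if i = j then 1 else 0)
    (hfact : (Matrix.of fun i j =>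
        if blkμ i = b ∧ blkμ j = b then Dμ i j else if i = j then 1 else 0) = L * Δ * U) :
    (∀ i j, blkμ i = blkμ j → blkμ i ≠ b → Dν i j = Dμ i j) ∧
    (∀ i j, blkμ i = b → blkμ j = b → blkν i = blkν j → Dν i j = Δ i j) :=
  stmt_14_general n A blkμ blkν b hlt hgt heq T Fμ Dμ Eμ Fν Dν Eν L Δ U hFμ1 hFμ2 hDμ hEμ1 hEμ2
    hdecμ hFν1 hFν2 hDν hEν1 hEν2 hdecν hL1 hL2 hL3 hU1 hU2 hU3 hΔ1 hΔ2 hfact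
end

section
/- Let ε : U(gl_β) → ℂ be the counit-like homomorphism with ε(ẽ_{i,j}) = 0 for all i,j, and let Δ_R : Y(σ) → Y(σ̇) ⊗ U(gl_β) be the baby comultiplication of Theorem 4.2(1). Then the composition m ∘ (id ⊗ ε) ∘ Δ_R : Y(σ) → Y(σ̇) equals the natural inclusion Y(σ) ↪ Y(σ̇); in particular Δ_R is injective. -/
/-!
Killing the second tensor factor with the character `ε` undoes `Δ_R` on every generator: the
correction terms `Ḋ ⊗ ẽ`, `Ė ⊗ ẽ` all lie in `Y(σ̇) ⊗ ker ε`, so `D ↦ Ḋ`, `E ↦ Ė`, `F ↦ Ḟ`,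
which is the inclusion. Two algebra maps agreeing on generators are equal, and a map with an
injective left composite is injective.
-/

open scoped TensorProduct

namespace Algebra.TensorProduct

section

variable {R A U : Type*} [CommSemiring R] [Semiring A] [Algebra R A] [Semiring U] [Algebra R U]

noncomputable def contractRight (ε : U →ₐ[R] R) : A ⊗[R] U →ₐ[R] A :=
  (Algebra.TensorProduct.rid R R A).toAlgHom.comp (map (AlgHom.id R A) ε)

theorem contractRight_tmul (ε : U →ₐ[R] R) (a : A) (u : U) :
    contractRight ε (a ⊗ₜ[R] u) = ε u • a := by
  simp [contractRight]

theorem contractRight_tmul_one (ε : U →ₐ[R] R) (a : A) :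
    contractRight ε (a ⊗ₜ[R] (1 : U)) = a := by
  rw [contractRight_tmul, map_one, one_smul]

theorem contractRight_sum_tmul_eq_zero {ι : Type*} (ε : U →ₐ[R] R) (s : Finset ι)
    (a : ι → A) (u : ι → U) (hu : ∀ k ∈ s, ε (u k) = 0) :
    contractRight ε (∑ k ∈ s, a k ⊗ₜ[R] u k) = 0 := by
  rw [map_sum]
  exact Finset.sum_eq_zero fun k hk => by rw [contractRight_tmul, hu k hk, zero_smul]

end

section

variable {R A U : Type*} [CommRing R] [Ring A] [Algebra R A] [Ring U] [Algebra R U]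

theorem contractRight_tmul_one_sub_ite_sum {ι : Type*} (ε : U →ₐ[R] R) (p : Prop) [Decidable p]
    (s : Finset ι) (x : A) (a : ι → A) (u : ι → U) (hu : ∀ k ∈ s, ε (u k) = 0) :
    contractRight ε
      (x ⊗ₜ[R] (1 : U) - if p then ∑ k ∈ s, a k ⊗ₜ[R] u k else 0) = x := by
  have hcorr : contractRight ε (if p then ∑ k ∈ s, a k ⊗ₜ[R] u k else 0) = 0 := by
    split_ifs
    · exact contractRight_sum_tmul_eq_zero ε s a u hu
    · exact map_zero _
  rw [map_sub, hcorr, sub_zero, contractRight_tmul_one]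

end

end Algebra.TensorProduct

/-- The baby comultiplication `Δ_R : Y(σ) → Y(σ̇) ⊗ U(gl_β)` composed with
`m ∘ (id ⊗ ε)` equals the natural inclusion `Y(σ) ↪ Y(σ̇)`; in particular `Δ_R`
is injective. -/
theorem stmt_15 (m β : ℕ)
    (Y Yd U : Type) [Ring Y] [Algebra ℂ Y] [Ring Yd] [Algebra ℂ Yd] [Ring U] [Algebra ℂ U]
    (D : Fin (m+1) → ℕ → ℕ → ℕ → Y) (E F : Fin m → ℕ → ℕ → ℕ → Y)
    (Dd : Fin (m+1) → ℕ → ℕ → ℕ → Yd) (Ed Fd : Fin m → ℕ → ℕ → ℕ → Yd)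
    (et : ℕ → ℕ → U)
    (ε : U →ₐ[ℂ] ℂ) (hε : ∀ i j, ε (et i j) = 0)
    (ι : Y →ₐ[ℂ] Yd) (hιinj : Function.Injective ι)
    (hιD : ∀ a i j r, ι (D a i j r) = Dd a i j r)
    (hιE : ∀ a i j r, ι (E a i j r) = Ed a i j r)
    (hιF : ∀ a i j r, ι (F a i j r) = Fd a i j r)
    (ΔR : Y →ₐ[ℂ] Yd ⊗[ℂ] U)
    (hΔD : ∀ a i j r, ΔR (D a i j r) =
      Dd a i j r ⊗ₜ[ℂ] 1 -
        (if (a : ℕ) = m then ∑ k ∈ Finset.Icc 1 β, Dd a i k (r-1) ⊗ₜ[ℂ] et k j else 0))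
    (hΔE : ∀ a i j r, ΔR (E a i j r) =
      Ed a i j r ⊗ₜ[ℂ] 1 -
        (if (a : ℕ) + 1 = m then ∑ k ∈ Finset.Icc 1 β, Ed a i k (r-1) ⊗ₜ[ℂ] et k j else 0))
    (hΔF : ∀ a i j r, ΔR (F a i j r) = Fd a i j r ⊗ₜ[ℂ] 1)
    (hgen : Algebra.adjoin ℂ
      ({y | ∃ a i j r, y = D a i j r} ∪ {y | ∃ a i j r, y = E a i j r} ∪
        {y | ∃ a i j r, y = F a i j r}) = ⊤) :
    (∀ y : Y,
      (Algebra.TensorProduct.rid ℂ ℂ Yd)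
        ((Algebra.TensorProduct.map (AlgHom.id ℂ Yd) ε) (ΔR y)) = ι y) ∧
    Function.Injective ΔR := by
  have hcomp : (Algebra.TensorProduct.contractRight ε).comp ΔR = ι := by
    refine AlgHom.ext_of_adjoin_eq_top hgen ?_
    rintro y ((⟨a, i, j, r, rfl⟩ | ⟨a, i, j, r, rfl⟩) | ⟨a, i, j, r, rfl⟩) <;>
      simp only [AlgHom.comp_apply]
    · rw [hΔD, hιD]
      exact Algebra.TensorProduct.contractRight_tmul_one_sub_ite_sum ε _ _ _ _ _
        fun k _ => hε k j
    · rw [hΔE, hιE]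
      exact Algebra.TensorProduct.contractRight_tmul_one_sub_ite_sum ε _ _ _ _ _
        fun k _ => hε k j
    · rw [hΔF, Algebra.TensorProduct.contractRight_tmul_one, hιF]
  refine ⟨fun y => DFunLike.congr_fun hcomp y, ?_⟩
  have hinj : Function.Injective ((Algebra.TensorProduct.contractRight ε).comp ΔR) := by
    rwa [hcomp]
  exact Function.Injective.of_comp (f := Algebra.TensorProduct.contractRight ε) hinj
end
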